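/- Let c > 0, π̂ ∈ (0,1), and let f be the solution of the free boundary problem with threshold π* (i.e., f(x) = Ψ(x) + Āx + B̄ on [π̂,π*] with f'(π̂) = 0, f'(π*) = -1, f(π*) = 1-π*, where Ψ(x) = 2c(1-2x)·log(x/(1-x))). Then f(x) ≤ 1 - x for all x ∈ [π̂,1]. -/

import Mathlib

/-!
`Ψ x = 2c(1-2x)·log(x/(1-x))` is concave on `(0,1)`, its second derivative being
`-8c/(x(1-x)) - 2c(1-2x)²/(x(1-x))²`. Hence on `[π̂, π*]` the function `f` lies below its
tangent line at `π*`, and the conditions `f(π*) = 1 - π*`, `f'(π*) = -1` say that this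
tangent line is `1 - x`.
-/

open Real Set

noncomputable def psi (c x : ℝ) : ℝ := 2 * c * (1 - 2 * x) * log (x / (1 - x))

noncomputable def psiDeriv (c x : ℝ) : ℝ :=
  -(4 * c) * log (x / (1 - x)) + 2 * c * (1 - 2 * x) / (x * (1 - x))

lemma hasDerivAt_log_div_one_sub {x : ℝ} (hx : x ∈ Ioo (0 : ℝ) 1) :
    HasDerivAt (fun y => log (y / (1 - y))) (1 / (x * (1 - x))) x := by
  obtain ⟨hx0, hx1⟩ := hx
  have hx1' : 0 < 1 - x := by linarith
  have hdiv := (hasDerivAt_id' x).fun_div ((hasDerivAt_id' x).const_sub 1) hx1'.ne'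
  refine (hdiv.log (by positivity)).congr_deriv ?_
  field_simp
  ring

lemma hasDerivAt_mul_one_sub_two_mul (a x : ℝ) :
    HasDerivAt (fun y => a * (1 - 2 * y)) (-(2 * a)) x :=
  (((hasDerivAt_id' x).const_mul 2).const_sub 1).const_mul a |>.congr_deriv (by ring)

lemma hasDerivAt_psi {c x : ℝ} (hx : x ∈ Ioo (0 : ℝ) 1) :
    HasDerivAt (psi c) (psiDeriv c x) x :=
  ((hasDerivAt_mul_one_sub_two_mul (2 * c) x).fun_mul
    (hasDerivAt_log_div_one_sub hx)).congr_deriv (by rw [psiDeriv]; ring)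

lemma hasDerivAt_psiDeriv {c x : ℝ} (hx : x ∈ Ioo (0 : ℝ) 1) :
    HasDerivAt (psiDeriv c)
      (-(8 * c) / (x * (1 - x)) - 2 * c * (1 - 2 * x) ^ 2 / (x * (1 - x)) ^ 2) x := by
  have hx1 : 0 < 1 - x := by linarith [hx.2]
  have hden := (hasDerivAt_id' x).fun_mul ((hasDerivAt_id' x).const_sub 1)
  refine (((hasDerivAt_log_div_one_sub hx).const_mul (-(4 * c))).add
    ((hasDerivAt_mul_one_sub_two_mul (2 * c) x).fun_div hden
      (by nlinarith [hx.1]))).congr_deriv ?_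
  field_simp
  ring

lemma concaveOn_psi {c : ℝ} (hc : 0 ≤ c) : ConcaveOn ℝ (Ioo 0 1) (psi c) := by
  refine concaveOn_of_hasDerivWithinAt2_nonpos (convex_Ioo 0 1)
    (fun x hx => (hasDerivAt_psi hx).continuousAt.continuousWithinAt) (f' := psiDeriv c)
    (f'' := fun x => -(8 * c) / (x * (1 - x)) - 2 * c * (1 - 2 * x) ^ 2 / (x * (1 - x)) ^ 2)
    ?_ ?_ ?_ <;> rw [interior_Ioo]
  · exact fun x hx => (hasDerivAt_psi hx).hasDerivWithinAt
  · exact fun x hx => (hasDerivAt_psiDeriv hx).hasDerivWithinAt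
  · rintro x ⟨hx0, hx1⟩
    have : 0 < 1 - x := by linarith
    have : 0 ≤ 8 * c / (x * (1 - x)) := by positivity
    have : 0 ≤ 2 * c * (1 - 2 * x) ^ 2 / (x * (1 - x)) ^ 2 := by positivity
    rw [neg_div]
    linarith

lemma ConcaveOn.le_add_mul_sub_of_hasDerivAt {S : Set ℝ} {f : ℝ → ℝ} {f' a x : ℝ}
    (hf : ConcaveOn ℝ S f) (ha : a ∈ S) (hx : x ∈ S) (hfa : HasDerivAt f f' a) :
    f x ≤ f a + f' * (x - a) := by
  rcases lt_trichotomy x a with hxa | rfl | hax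
  · have hslope := hf.le_slope_of_hasDerivAt hx ha hxa hfa
    rw [slope_def_field, le_div_iff₀ (by linarith)] at hslope
    linarith
  · simp
  · have hslope := hf.slope_le_of_hasDerivAt ha hx hax hfa
    rw [slope_def_field, div_le_iff₀ (by linarith)] at hslope
    linarith

theorem stmt8_general (c πh πs A B : ℝ) (hc : 0 < c)
    (h1 : 0 < πh) (h3 : πs < 1)
    (Ψ : ℝ → ℝ) (hΨ : ∀ x, Ψ x = 2*c*(1-2*x)*Real.log (x/(1-x)))
    (hslope : deriv Ψ πs + A = -1)
    (hB : Ψ πs + A*πs + B = 1 - πs)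
    (f : ℝ → ℝ)
    (hf : ∀ x, f x = if x ≤ πs then Ψ x + A*x + B else 1 - x) :
    ∀ x ∈ Set.Icc πh 1, f x ≤ 1 - x := by
  intro x hx
  rw [hf x]
  split_ifs with hxs
  · obtain rfl : Ψ = psi c := funext hΨ
    have hx01 : x ∈ Ioo (0 : ℝ) 1 := ⟨h1.trans_le hx.1, hxs.trans_lt h3⟩
    have hs01 : πs ∈ Ioo (0 : ℝ) 1 := ⟨hx01.1.trans_le hxs, h3⟩
    have hderiv := hasDerivAt_psi (c := c) hs01
    have htangent := (concaveOn_psi hc.le).le_add_mul_sub_of_hasDerivAt hs01 hx01 hderiv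
    rw [← hderiv.deriv, show deriv (psi c) πs = -1 - A by linarith] at htangent
    linarith
  · exact le_rfl

theorem stmt8 (c πh πs A B : ℝ) (hc : 0 < c)
    (h1 : 0 < πh) (h2 : πh < πs) (h3 : πs < 1)
    (Ψ : ℝ → ℝ) (hΨ : ∀ x, Ψ x = 2*c*(1-2*x)*Real.log (x/(1-x)))
    (hA : A = -deriv Ψ πh)
    (hslope : deriv Ψ πs + A = -1)
    (hB : Ψ πs + A*πs + B = 1 - πs)
    (f : ℝ → ℝ)
    (hf : ∀ x, f x = if x ≤ πs then Ψ x + A*x + B else 1 - x) :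
    ∀ x ∈ Set.Icc πh 1, f x ≤ 1 - x :=
  stmt8_general c πh πs A B hc h1 h3 Ψ hΨ hslope hB f hf
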